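/- Let d ≥ 1 and β > 0. There is a constant C = C(d) such that for all reals R > 0 and L ≥ 1 with 1 ≤ R L^{d/β} ≤ L: Σ over pairs (n, n') ∈ ℤ^d × ℤ^d with L ≤ |n|_∞ ≤ L + R L^{d/β}, L ≤ |n'|_∞ ≤ L + R L^{d/β} and |n−n'|_∞ ≤ R L^{d/β}, of |n|^{−2d} |n'|^{−2d}, is at most C R^{d+1} L^{−2d} · L^{−d−1 + d²/β + d/β}. -/
import Mathlib


/-- Euclidean norm of a lattice point of `ℤ^d`. -/
noncomputable def zEucNorm {d : ℕ} (n : Fin d → ℤ) : ℝ :=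
  Real.sqrt (∑ i, ((n i : ℝ)) ^ 2)

/-- ℓ∞ norm of a lattice point of `ℤ^d`. -/
noncomputable def zSupNorm {d : ℕ} (n : Fin d → ℤ) : ℝ :=
  ((Finset.univ.sup fun i => (n i).natAbs : ℕ) : ℝ)

open Finset

lemma coord_le_zSupNorm {d : ℕ} (n : Fin d → ℤ) (j : Fin d) :
    (|(n j : ℝ)|) ≤ zSupNorm n := by
  have h : (n j).natAbs ≤ Finset.univ.sup fun i => (n i).natAbs :=
    Finset.le_sup (f := fun i => (n i).natAbs) (mem_univ j)
  have := (Nat.cast_le (α := ℝ)).2 h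
  rwa [Nat.cast_natAbs, Int.cast_abs] at this

lemma zSupNorm_le_zEucNorm {d : ℕ} (hd : 1 ≤ d) (n : Fin d → ℤ) :
    zSupNorm n ≤ zEucNorm n := by
  obtain ⟨j, -, hj⟩ := Finset.exists_mem_eq_sup Finset.univ
    (Finset.univ_nonempty_iff.2 ⟨⟨0, hd⟩⟩) (fun i => (n i).natAbs)
  have h1 : zSupNorm n = |(n j : ℝ)| := by
    rw [zSupNorm, hj, Nat.cast_natAbs, Int.cast_abs]
  rw [h1, ← Real.sqrt_sq_eq_abs]
  exact Real.sqrt_le_sqrt (Finset.single_le_sum (f := fun i => ((n i : ℝ))^2)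
    (fun i _ => sq_nonneg _) (mem_univ j))

set_option maxHeartbeats 800000 in
lemma pairs_card_bound {d : ℕ} (hd : 1 ≤ d) (L r : ℝ) (hL : 1 ≤ L) (hr : 1 ≤ r)
    (hrL : r ≤ L) :
    ∃ T : Finset ((Fin d → ℤ) × (Fin d → ℤ)),
      (∀ p : (Fin d → ℤ) × (Fin d → ℤ),
        ((L ≤ zSupNorm p.1 ∧ zSupNorm p.1 ≤ L + r) ∧
         (L ≤ zSupNorm p.2 ∧ zSupNorm p.2 ≤ L + r) ∧
         zSupNorm (p.1 - p.2) ≤ r) → p ∈ T) ∧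
      (T.card : ℝ) ≤ d * (4*r) * (5*L)^(d-1) * (3*r)^d := by
  classical
  set a : ℤ := ⌈L⌉ with ha
  set b : ℤ := ⌊L + r⌋ with hb
  set k : ℤ := ⌊r⌋ with hk
  have haL : (L : ℝ) ≤ (a : ℝ) := Int.le_ceil L
  have haL' : (a : ℝ) ≤ L + 1 := by
    have := Int.ceil_lt_add_one L; linarith
  have hbL : (b : ℝ) ≤ L + r := Int.floor_le _
  have hbL' : L + r - 1 < (b : ℝ) := by
    have := Int.sub_one_lt_floor (L + r); linarith
  have hkr : (k : ℝ) ≤ r := Int.floor_le _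
  have hk0 : 0 ≤ k := by
    rw [hk]; exact Int.floor_nonneg.2 (by linarith)
  have hab : a ≤ b := by
    have h : (a : ℝ) < (b : ℝ) + 1 := by linarith
    have h2 : a < b + 1 := by exact_mod_cast h
    omega
  have ha1 : 1 ≤ a := by
    have : (1 : ℝ) ≤ (a : ℝ) := by linarith
    exact_mod_cast this
  set Iann : Finset ℤ := Finset.Icc (-b) (-a) ∪ Finset.Icc a b with hIann
  set Ibox : Finset ℤ := Finset.Icc (-b) b with hIbox
  set Iball : Finset ℤ := Finset.Icc (-k) k with hIball
  set A : Finset (Fin d → ℤ) :=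
    Finset.univ.biUnion (fun i => Fintype.piFinset fun j => if j = i then Iann else Ibox) with hA
  set Bl : Finset (Fin d → ℤ) := Fintype.piFinset fun _ => Iball with hBl
  refine ⟨(A ×ˢ Bl).image (fun q => (q.1, q.1 - q.2)), ?_, ?_⟩
  · rintro ⟨n, n'⟩ ⟨⟨h1, h2⟩, ⟨h3, h4⟩, h5⟩
    refine Finset.mem_image.2 ⟨(n, n - n'), ?_, by simp⟩
    refine Finset.mem_product.2 ⟨?_, ?_⟩
    · -- n ∈ A
      obtain ⟨i, -, hi⟩ := Finset.exists_mem_eq_sup Finset.univ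
        (Finset.univ_nonempty_iff.2 ⟨⟨0, hd⟩⟩) (fun j => (n j).natAbs)
      have hcoordb : ∀ j, |n j| ≤ b := by
        intro j
        have h := (coord_le_zSupNorm n j).trans h2
        rw [← Int.cast_abs] at h
        exact Int.le_floor.2 h
      have hia : a ≤ |n i| := by
        have hsup : zSupNorm n = |(n i : ℝ)| := by
          rw [zSupNorm, hi, Nat.cast_natAbs, Int.cast_abs]
        have : L ≤ |(n i : ℝ)| := hsup ▸ h1
        rw [← Int.cast_abs] at this
        exact Int.ceil_le.2 this
      refine Finset.mem_biUnion.2 ⟨i, mem_univ i, Fintype.mem_piFinset.2 fun j => ?_⟩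
      by_cases hji : j = i
      · subst hji
        rw [if_pos rfl]
        simp only [hIann, Finset.mem_union, Finset.mem_Icc]
        have hjb := abs_le.1 (hcoordb j)
        have hja := le_abs.1 hia
        omega
      · simp only [if_neg hji, hIbox, Finset.mem_Icc]
        exact abs_le.1 (hcoordb j)
    · -- n - n' ∈ Bl
      refine Fintype.mem_piFinset.2 fun j => ?_
      have h := (coord_le_zSupNorm (n - n') j).trans h5
      rw [← Int.cast_abs] at h
      have : |(n - n') j| ≤ k := Int.le_floor.2 h
      simp only [hIball, Finset.mem_Icc]
      exact abs_le.1 this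
  · -- card bound
    have hcardIcc : ∀ u v : ℤ, u ≤ v → ((Finset.Icc u v).card : ℝ) = (v : ℝ) - u + 1 := by
      intro u v huv
      rw [Int.card_Icc]
      have h0 : (0 : ℤ) ≤ v + 1 - u := by omega
      have h1 : (((v + 1 - u).toNat : ℤ) : ℝ) = (v : ℝ) - u + 1 := by
        rw [Int.toNat_of_nonneg h0]; push_cast; ring
      exact_mod_cast h1
    have hIannCard : ((Iann.card : ℝ)) ≤ 4 * r := by
      have h1 : Iann.card ≤ (Finset.Icc (-b) (-a)).card + (Finset.Icc a b).card :=
        Finset.card_union_le _ _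
      have h2 := hcardIcc (-b) (-a) (by omega)
      have h3 := hcardIcc a b hab
      have : ((Iann.card : ℝ)) ≤ ((Finset.Icc (-b) (-a)).card : ℝ) + ((Finset.Icc a b).card : ℝ) := by
        exact_mod_cast h1
      rw [h2, h3] at this
      push_cast at this ⊢
      nlinarith
    have hIboxCard : ((Ibox.card : ℝ)) ≤ 5 * L := by
      rw [hcardIcc (-b) b (by omega)]
      push_cast
      nlinarith
    have hIballCard : ((Iball.card : ℝ)) ≤ 3 * r := by
      rw [hcardIcc (-k) k (by omega)]
      push_cast
      nlinarith
    have hAcard : (A.card : ℝ) ≤ d * (4 * r * (5 * L)^(d-1)) := by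
      have h1 : A.card ≤ ∑ i : Fin d, (Fintype.piFinset fun j => if j = i then Iann else Ibox).card :=
        Finset.card_biUnion_le
      have h2 : ∀ i : Fin d,
          ((Fintype.piFinset fun j => if j = i then Iann else Ibox).card : ℝ)
            ≤ 4 * r * (5 * L)^(d-1) := by
        intro i
        rw [Fintype.card_piFinset]
        have hprod : (∏ j : Fin d, (if j = i then Iann else Ibox).card)
            = Iann.card * Ibox.card ^ (d - 1) := by
          rw [← Finset.mul_prod_erase Finset.univ _ (mem_univ i), if_pos rfl]
          congr 1
          rw [Finset.prod_congr rfl (fun j hj => by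
            rw [if_neg (Finset.ne_of_mem_erase hj)]), Finset.prod_const,
            Finset.card_erase_of_mem (mem_univ i), Finset.card_univ, Fintype.card_fin]
        rw [hprod]
        push_cast
        have hbox_pow : ((Ibox.card : ℝ)) ^ (d-1) ≤ (5*L)^(d-1) :=
          pow_le_pow_left₀ (by positivity) hIboxCard _
        have h0 : (0:ℝ) ≤ (Iann.card : ℝ) := by positivity
        nlinarith [pow_nonneg (show (0:ℝ) ≤ (Ibox.card:ℝ) by positivity) (d-1)]
      calc (A.card : ℝ) ≤ ∑ i : Fin d,
            ((Fintype.piFinset fun j => if j = i then Iann else Ibox).card : ℝ) := by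
              exact_mod_cast h1
        _ ≤ ∑ _i : Fin d, (4 * r * (5 * L)^(d-1)) :=
              Finset.sum_le_sum (fun i _ => h2 i)
        _ = d * (4 * r * (5 * L)^(d-1)) := by
              rw [Finset.sum_const, Finset.card_univ, Fintype.card_fin, nsmul_eq_mul]
    have hBlcard : (Bl.card : ℝ) ≤ (3 * r)^d := by
      rw [hBl, Fintype.card_piFinset]
      push_cast
      calc (∏ _j : Fin d, (Iball.card : ℝ)) = ((Iball.card : ℝ))^d := by
            rw [Finset.prod_const, Finset.card_univ, Fintype.card_fin]
        _ ≤ (3*r)^d := pow_le_pow_left₀ (by positivity) hIballCard _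
    calc (((A ×ˢ Bl).image (fun q : (Fin d → ℤ) × (Fin d → ℤ) => (q.1, q.1 - q.2))).card : ℝ)
        ≤ ((A ×ˢ Bl).card : ℝ) := by exact_mod_cast Finset.card_image_le
      _ = (A.card : ℝ) * (Bl.card : ℝ) := by rw [Finset.card_product]; push_cast; ring
      _ ≤ (d * (4 * r * (5 * L)^(d-1))) * (3*r)^d := by
          apply mul_le_mul hAcard hBlcard (by positivity) (by positivity)
      _ = d * (4*r) * (5*L)^(d-1) * (3*r)^d := by ring


set_option maxHeartbeats 800000 in
/-- short-range-dependence estimate. For `1 ≤ R L^{d/β} ≤ L`, the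
sum over pairs in the annulus `L ≤ |n|_∞ ≤ L + R L^{d/β}`,
`L ≤ |n'|_∞ ≤ L + R L^{d/β}` at mutual ℓ∞-distance at most `R L^{d/β}` of
`|n|^{-2d} |n'|^{-2d}` is at most `C R^{d+1} L^{-2d} L^{-d-1+d²/β+d/β}`. -/
theorem shortrange_dependence_estimate (d : ℕ) (hd : 1 ≤ d) (β : ℝ) (hβ : 0 < β) :
    ∃ C : ℝ, 0 < C ∧ ∀ R L : ℝ, 0 < R → 1 ≤ L →
      1 ≤ R * L ^ ((d : ℝ) / β) → R * L ^ ((d : ℝ) / β) ≤ L →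
      Summable (fun p : {p : (Fin d → ℤ) × (Fin d → ℤ) //
          (L ≤ zSupNorm p.1 ∧ zSupNorm p.1 ≤ L + R * L ^ ((d : ℝ) / β)) ∧
          (L ≤ zSupNorm p.2 ∧ zSupNorm p.2 ≤ L + R * L ^ ((d : ℝ) / β)) ∧
          zSupNorm (p.1 - p.2) ≤ R * L ^ ((d : ℝ) / β)} =>
        zEucNorm p.1.1 ^ (-(2 * (d : ℝ))) * zEucNorm p.1.2 ^ (-(2 * (d : ℝ)))) ∧
      (∑' p : {p : (Fin d → ℤ) × (Fin d → ℤ) //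
          (L ≤ zSupNorm p.1 ∧ zSupNorm p.1 ≤ L + R * L ^ ((d : ℝ) / β)) ∧
          (L ≤ zSupNorm p.2 ∧ zSupNorm p.2 ≤ L + R * L ^ ((d : ℝ) / β)) ∧
          zSupNorm (p.1 - p.2) ≤ R * L ^ ((d : ℝ) / β)},
        zEucNorm p.1.1 ^ (-(2 * (d : ℝ))) * zEucNorm p.1.2 ^ (-(2 * (d : ℝ)))) ≤
        C * R ^ (d + 1) * L ^ (-(2 * (d : ℝ))) *
          L ^ (-(d : ℝ) - 1 + (d : ℝ) ^ 2 / β + (d : ℝ) / β) := by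
  classical
  refine ⟨4 * d * 5^(d-1) * 3^d, by positivity, ?_⟩
  intro R L hR hL hr1 hrL
  set r : ℝ := R * L ^ ((d : ℝ) / β) with hrdef
  have hL0 : (0 : ℝ) < L := by linarith
  obtain ⟨T, hT, hTcard⟩ := pairs_card_bound hd L r hL hr1 hrL
  set P : (Fin d → ℤ) × (Fin d → ℤ) → Prop := fun p =>
    (L ≤ zSupNorm p.1 ∧ zSupNorm p.1 ≤ L + r) ∧
    (L ≤ zSupNorm p.2 ∧ zSupNorm p.2 ≤ L + r) ∧
    zSupNorm (p.1 - p.2) ≤ r with hP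
  have hsub : {p : (Fin d → ℤ) × (Fin d → ℤ) | P p} ⊆ ↑T := fun p hp => hT p hp
  have hfin : {p : (Fin d → ℤ) × (Fin d → ℤ) | P p}.Finite :=
    Set.Finite.subset T.finite_toSet hsub
  haveI inst1 : Fintype ↥{p : (Fin d → ℤ) × (Fin d → ℤ) | P p} := hfin.fintype
  haveI inst2 : Fintype {p : (Fin d → ℤ) × (Fin d → ℤ) // P p} := inst1
  set f : {p : (Fin d → ℤ) × (Fin d → ℤ) // P p} → ℝ := fun p =>
    zEucNorm p.1.1 ^ (-(2 * (d : ℝ))) * zEucNorm p.1.2 ^ (-(2 * (d : ℝ))) with hf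
  refine ⟨Summable.of_finite, ?_⟩
  have hterm : ∀ p : {p : (Fin d → ℤ) × (Fin d → ℤ) // P p},
      f p ≤ L ^ (-(2 * (d : ℝ))) * L ^ (-(2 * (d : ℝ))) := by
    intro ⟨p, hp⟩
    have hb1 : L ≤ zEucNorm p.1 := hp.1.1.trans (zSupNorm_le_zEucNorm hd p.1)
    have hb2 : L ≤ zEucNorm p.2 := hp.2.1.1.trans (zSupNorm_le_zEucNorm hd p.2)
    have hneg : (-(2 * (d : ℝ))) ≤ 0 := neg_nonpos.2 (by positivity)
    exact mul_le_mul (Real.rpow_le_rpow_of_nonpos hL0 hb1 hneg)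
      (Real.rpow_le_rpow_of_nonpos hL0 hb2 hneg)
      (Real.rpow_nonneg (Real.sqrt_nonneg _) _)
      (Real.rpow_nonneg hL0.le _)
  have hsum : (∑' p, f p) ≤ (T.card : ℝ) * (L ^ (-(2 * (d : ℝ))) * L ^ (-(2 * (d : ℝ)))) := by
    rw [tsum_fintype]
    calc (∑ p, f p) ≤ Fintype.card {p : (Fin d → ℤ) × (Fin d → ℤ) // P p} •
          (L ^ (-(2 * (d : ℝ))) * L ^ (-(2 * (d : ℝ)))) := by
          rw [← Finset.card_univ]
          exact Finset.sum_le_card_nsmul _ _ _ (fun p _ => hterm p)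
      _ ≤ (T.card : ℝ) * (L ^ (-(2 * (d : ℝ))) * L ^ (-(2 * (d : ℝ)))) := by
          rw [nsmul_eq_mul]
          apply mul_le_mul_of_nonneg_right _ (by positivity)
          have hcard : Fintype.card {p : (Fin d → ℤ) × (Fin d → ℤ) // P p} ≤ T.card := by
            have hinj := Fintype.card_le_of_injective
              (fun p : {p : (Fin d → ℤ) × (Fin d → ℤ) // P p} =>
                (⟨p.1, hT p.1 p.2⟩ : {x // x ∈ T}))
              (fun p q h => Subtype.ext (congrArg (Subtype.val : {x // x ∈ T} → (Fin d → ℤ) × (Fin d → ℤ)) h))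
            simpa [Fintype.card_coe] using hinj
          exact_mod_cast hcard
  refine hsum.trans ?_
  have hbound : (T.card : ℝ) * (L ^ (-(2 * (d : ℝ))) * L ^ (-(2 * (d : ℝ))))
      ≤ (d * (4*r) * (5*L)^(d-1) * (3*r)^d) * (L ^ (-(2 * (d : ℝ))) * L ^ (-(2 * (d : ℝ)))) :=
    mul_le_mul_of_nonneg_right hTcard (by positivity)
  refine hbound.trans (le_of_eq ?_)
  -- pure identity
  have hkey : ∀ s t : ℝ, L ^ s * L ^ t = L ^ (s + t) := fun s t => (Real.rpow_add hL0 s t).symm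
  have e1 : (5*L)^(d-1) = 5^(d-1) * L ^ ((d:ℝ) - 1) := by
    rw [mul_pow, ← Real.rpow_natCast L (d-1), Nat.cast_sub hd, Nat.cast_one]
  have e2 : (3*r)^d = 3^d * R^d * L ^ ((d:ℝ)/β * d) := by
    rw [hrdef, mul_pow, mul_pow, ← Real.rpow_natCast (L ^ ((d:ℝ)/β)) d,
      ← Real.rpow_mul hL0.le]
    ring
  rw [e1, e2, hrdef]
  have emerge : L ^ ((d:ℝ)/β) * L ^ ((d:ℝ)/β * d) * L ^ ((d:ℝ) - 1) *
      (L ^ (-(2 * (d : ℝ))) * L ^ (-(2 * (d : ℝ))))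
      = L ^ (-(2 * (d : ℝ))) * L ^ (-(d : ℝ) - 1 + (d : ℝ) ^ 2 / β + (d : ℝ) / β) := by
    rw [hkey, hkey, hkey, hkey, hkey]
    congr 1
    field_simp
    ring
  calc (d : ℝ) * (4*(R * L ^ ((d:ℝ)/β))) * (5^(d-1) * L ^ ((d:ℝ) - 1)) *
        (3^d * R^d * L ^ ((d:ℝ)/β * d)) * (L ^ (-(2 * (d : ℝ))) * L ^ (-(2 * (d : ℝ))))
      = (4 * d * 5^(d-1) * 3^d) * (R * R^d) *
        (L ^ ((d:ℝ)/β) * L ^ ((d:ℝ)/β * d) * L ^ ((d:ℝ) - 1) *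
          (L ^ (-(2 * (d : ℝ))) * L ^ (-(2 * (d : ℝ))))) := by ring
    _ = (4 * d * 5^(d-1) * 3^d) * R^(d+1) * L ^ (-(2 * (d : ℝ))) *
        L ^ (-(d : ℝ) - 1 + (d : ℝ) ^ 2 / β + (d : ℝ) / β) := by
        rw [emerge, pow_succ]
        ring
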